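/- arXiv:2310.14632 — 2 statements merged into one kernel-verified Lean document; each statement's English description precedes it below -/
import Mathlib

section
/- In the Artin group G = ⟨a, b, c ∣ aba = bab, ac = ca, ₙ(b,c) = ₙ(c,b)⟩ with n ≥ 2, the element represented by the word (b,c)_{n−1}·aba equals the element represented by (c,b)_{n−1}·acb. -/
/-- `altS x y n` is the alternating product `xyxy⋯` of length `n` beginning with `x`. -/
def altS {M : Type*} [Monoid M] (x y : M) : ℕ → M
  | 0 => 1
  | n + 1 => x * altS y x n

/-- `altE x y n` is the alternating product `⋯xyxy` of length `n` ending with `y`. -/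
def altE {M : Type*} [Monoid M] (x y : M) : ℕ → M
  | 0 => 1
  | n + 1 => altE y x n * y

/-- Relations of G = ⟨a, b, c ∣ aba = bab, ac = ca, ₙ(b,c) = ₙ(c,b)⟩, with a = 0, b = 1, c = 2. -/
def artinRels (n : ℕ) : Set (FreeGroup (Fin 3)) :=
  { FreeGroup.of 0 * FreeGroup.of 1 * FreeGroup.of 0 *
      (FreeGroup.of 1 * FreeGroup.of 0 * FreeGroup.of 1)⁻¹,
    FreeGroup.of 0 * FreeGroup.of 2 * (FreeGroup.of 2 * FreeGroup.of 0)⁻¹,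
    altS (FreeGroup.of 1) (FreeGroup.of 2) n * (altS (FreeGroup.of 2) (FreeGroup.of 1) n)⁻¹ }

lemma altE_swap_mul {M : Type*} [Monoid M] (x y : M) :
    ∀ k, x * altE y x (2 * k) = altE x y (2 * k) * x
  | 0 => by simp [altE]
  | k + 1 => by
    have h := altE_swap_mul x y k
    have e1 : 2 * (k + 1) = (2 * k + 1) + 1 := by ring
    rw [e1]
    simp only [altE, ← mul_assoc]
    rw [h]

lemma altS_eq_altE {M : Type*} [Monoid M] :
    ∀ k, ∀ x y : M,
      altS x y (2 * k) = altE x y (2 * k) ∧ altS x y (2 * k + 1) = altE y x (2 * k + 1)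
  | 0 => by intro x y; simp [altS, altE]
  | k + 1 => by
    have IH := altS_eq_altE (M := M) k
    have heven : ∀ x y : M, altS x y (2 * (k + 1)) = altE x y (2 * (k + 1)) := by
      intro x y
      have e1 : 2 * (k + 1) = (2 * k + 1) + 1 := by ring
      rw [e1]
      show x * altS y x (2 * k + 1) = altE y x (2 * k + 1) * y
      rw [(IH y x).2]
      simp only [altE, ← mul_assoc]
      rw [altE_swap_mul]
    intro x y
    refine ⟨heven x y, ?_⟩
    show x * altS y x (2 * (k + 1)) = altE x y (2 * (k + 1)) * x
    rw [heven y x, altE_swap_mul]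

lemma altE_eq_of_altS {M : Type*} [Monoid M] {x y : M} {n : ℕ}
    (h : altS x y n = altS y x n) : altE x y n = altE y x n := by
  rcases Nat.even_or_odd n with ⟨k, hk⟩ | ⟨k, hk⟩
  · subst hk
    rw [← two_mul] at h ⊢
    rw [← (altS_eq_altE k x y).1, ← (altS_eq_altE k y x).1, h]
  · subst hk
    rw [← (altS_eq_altE k y x).2, ← (altS_eq_altE k x y).2, h]

lemma map_altS {M N : Type*} [Monoid M] [Monoid N] (f : M →* N) (x y : M) :
    ∀ n, f (altS x y n) = altS (f x) (f y) n
  | 0 => by simp [altS]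
  | n + 1 => by simp [altS, map_altS f y x n]

/-- In G, (b,c)_{n−1}·aba = (c,b)_{n−1}·acb for n ≥ 2. -/
theorem stmt6 (n : ℕ) (hn : 2 ≤ n) :
    letI a : PresentedGroup (artinRels n) := PresentedGroup.of 0
    letI b : PresentedGroup (artinRels n) := PresentedGroup.of 1
    letI c : PresentedGroup (artinRels n) := PresentedGroup.of 2
    altE b c (n - 1) * (a * b * a) = altE c b (n - 1) * (a * c * b) := by
  set a : PresentedGroup (artinRels n) := PresentedGroup.of 0 with ha
  set b : PresentedGroup (artinRels n) := PresentedGroup.of 1 with hb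
  set c : PresentedGroup (artinRels n) := PresentedGroup.of 2 with hc
  -- relations
  have hrel : ∀ r ∈ artinRels n, PresentedGroup.mk (artinRels n) r = 1 := by
    intro r hr
    have : r ∈ Subgroup.normalClosure (artinRels n) := Subgroup.subset_normalClosure hr
    exact (QuotientGroup.eq_one_iff r).2 this
  have h1 : a * b * a = b * a * b := by
    have := hrel _ (Set.mem_insert _ _)
    simp only [map_mul, map_inv] at this
    have := mul_inv_eq_one.mp this
    exact this
  have h2 : a * c = c * a := by
    have := hrel _ (Set.mem_insert_of_mem _ (Set.mem_insert _ _))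
    simp only [map_mul, map_inv] at this
    exact mul_inv_eq_one.mp this
  have h3 : altS b c n = altS c b n := by
    have := hrel _ (Set.mem_insert_of_mem _ (Set.mem_insert_of_mem _ rfl))
    simp only [map_mul, map_inv] at this
    have h := mul_inv_eq_one.mp this
    rw [map_altS, map_altS] at h
    exact h
  have h4 : altE b c n = altE c b n := altE_eq_of_altS h3
  obtain ⟨m, rfl⟩ : ∃ m, n = m + 2 := ⟨n - 2, by omega⟩
  have hm : m + 2 - 1 = m + 1 := rfl
  rw [hm]
  -- LHS = altE b c (m+1) * (a*b*a) = altE b c (m+1) * (b*a*b) = altE c b (m+2) * (a*b)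
  -- RHS = altE c b (m+1) * (a*c*b) = altE c b (m+1) * (c*a*b) = altE b c (m+2) * (a*b)
  have l1 : altE b c (m + 1) * (a * b * a) = altE c b (m + 2) * (a * b) := by
    rw [h1]
    show altE b c (m + 1) * (b * a * b) = altE b c (m + 1) * b * (a * b)
    group
  have l2 : altE c b (m + 1) * (a * c * b) = altE b c (m + 2) * (a * b) := by
    have : a * c * b = c * (a * b) := by rw [h2]; group
    rw [this]
    show altE c b (m + 1) * (c * (a * b)) = altE c b (m + 1) * c * (a * b)
    group
  rw [l1, l2, h4]
end

section
/- Let w be a positive word over {a, b} (no inverse letters). If w equals b^i · a · b^k in the braid group ⟨a, b ∣ aba = bab⟩ for some integers i, k ≥ 1, then w is one of the words b^{i'}·a·b·a^{i−i'}·b^{k−1} for some 0 ≤ i' ≤ i, or b^{i−1}·a^{k−k'}·b·a·b^{k'} for some 0 ≤ k' ≤ k. -/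
def braidRels : Set (FreeGroup (Fin 2)) :=
  {FreeGroup.of 0 * FreeGroup.of 1 * FreeGroup.of 0 *
    (FreeGroup.of 1 * FreeGroup.of 0 * FreeGroup.of 1)⁻¹}

abbrev BraidGroup := PresentedGroup braidRels

noncomputable def a : BraidGroup := PresentedGroup.of 0
noncomputable def b : BraidGroup := PresentedGroup.of 1

/-- The element of the braid group represented by a positive word over {a, b}
(a = 0, b = 1). -/
noncomputable def wordProd (w : List (Fin 2)) : BraidGroup :=
  (w.map PresentedGroup.of).prod

namespace B11

abbrev Ltr := Fin 2
abbrev W := List Ltr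

def Rel (x y : W) : Prop :=
  ∃ l r : W, x = l ++ [0,1,0] ++ r ∧ y = l ++ [1,0,1] ++ r

def Step (x y : W) : Prop := Rel x y ∨ Rel y x

lemma Step.symm' {x y : W} (h : Step x y) : Step y x := h.elim Or.inr Or.inl

inductive Ch : ℕ → W → W → Prop
  | refl (x : W) : Ch 0 x x
  | cons {n : ℕ} {x y z : W} : Step x y → Ch n y z → Ch (n+1) x z

def Beq (x y : W) : Prop := ∃ n, Ch n x y

scoped infix:50 " ≋ " => Beq

lemma beq_refl (x : W) : x ≋ x := ⟨0, .refl x⟩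

lemma beq_of_step {x y : W} (h : Step x y) : x ≋ y := ⟨1, .cons h (.refl y)⟩

lemma ch_trans {m n : ℕ} {x y z : W} (h1 : Ch m x y) (h2 : Ch n y z) : Ch (m+n) x z := by
  induction h1 with
  | refl => simpa using h2
  | @cons n₀ x y' z' s _ ih =>
    have h := Ch.cons s (ih h2)
    have e : n₀ + n + 1 = n₀ + 1 + n := by omega
    rwa [e] at h

lemma ch_snoc {n : ℕ} {x y z : W} (h : Ch n x y) (s : Step y z) : Ch (n+1) x z :=
  ch_trans h (Ch.cons s (.refl z))

lemma ch_symm {n : ℕ} {x y : W} (h : Ch n x y) : Ch n y x := by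
  induction h with
  | refl => exact .refl _
  | cons s _ ih => exact ch_snoc ih s.symm'

lemma beq_symm {x y : W} (h : x ≋ y) : y ≋ x := h.imp fun _ => ch_symm

lemma beq_trans {x y z : W} (h1 : x ≋ y) (h2 : y ≋ z) : x ≋ z := by
  obtain ⟨m, h1⟩ := h1; obtain ⟨n, h2⟩ := h2; exact ⟨m+n, ch_trans h1 h2⟩

lemma rel_cons (c : Ltr) {x y : W} (h : Rel x y) : Rel (c::x) (c::y) := by
  obtain ⟨l, r, hx, hy⟩ := h
  exact ⟨c::l, r, by simp [hx], by simp [hy]⟩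

lemma step_cons (c : Ltr) {x y : W} (h : Step x y) : Step (c::x) (c::y) :=
  h.imp (rel_cons c) (rel_cons c)

lemma beq_cons (c : Ltr) {x y : W} (h : x ≋ y) : (c::x) ≋ (c::y) := by
  obtain ⟨n, h⟩ := h
  refine ⟨n, ?_⟩
  induction h with
  | refl => exact .refl _
  | cons s _ ih => exact .cons (step_cons c s) ih

lemma beq_append_left (s : W) {x y : W} (h : x ≋ y) : (s ++ x) ≋ (s ++ y) := by
  induction s with
  | nil => simpa
  | cons c t ih => simpa using beq_cons c ih

lemma rel_append_right {x y : W} (s : W) (h : Rel x y) : Rel (x ++ s) (y ++ s) := by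
  obtain ⟨l, r, hx, hy⟩ := h
  exact ⟨l, r ++ s, by simp [hx], by simp [hy]⟩

lemma step_append_right {x y : W} (s : W) (h : Step x y) : Step (x ++ s) (y ++ s) :=
  h.imp (rel_append_right s) (rel_append_right s)

lemma beq_append_right {x y : W} (s : W) (h : x ≋ y) : (x ++ s) ≋ (y ++ s) := by
  obtain ⟨n, h⟩ := h
  refine ⟨n, ?_⟩
  induction h with
  | refl => exact .refl _
  | cons st _ ih => exact .cons (step_append_right s st) ih

lemma beq_append {x y u v : W} (h1 : x ≋ y) (h2 : u ≋ v) : (x ++ u) ≋ (y ++ v) :=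
  beq_trans (beq_append_right u h1) (beq_append_left y h2)

lemma rel_length {x y : W} (h : Rel x y) : x.length = y.length := by
  obtain ⟨l, r, hx, hy⟩ := h; simp [hx, hy]

lemma step_length {x y : W} (h : Step x y) : x.length = y.length :=
  h.elim rel_length fun h' => (rel_length h').symm

lemma beq_length {x y : W} (h : x ≋ y) : x.length = y.length := by
  obtain ⟨n, h⟩ := h
  induction h with
  | refl => rfl
  | cons s _ ih => exact (step_length s).trans ih

lemma rel_reverse {x y : W} (h : Rel x y) : Rel x.reverse y.reverse := by
  obtain ⟨l, r, hx, hy⟩ := h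
  refine ⟨r.reverse, l.reverse, ?_, ?_⟩
  · rw [hx]; simp
  · rw [hy]; simp

lemma step_reverse {x y : W} (h : Step x y) : Step x.reverse y.reverse :=
  h.imp rel_reverse rel_reverse

lemma beq_reverse {x y : W} (h : x ≋ y) : x.reverse ≋ y.reverse := by
  obtain ⟨n, h⟩ := h
  refine ⟨n, ?_⟩
  induction h with
  | refl => exact .refl _
  | cons s _ ih => exact .cons (step_reverse s) ih

def swc : Ltr → Ltr := fun c => if c = 0 then 1 else 0

def sw : W → W := List.map swc

lemma sw_nil : sw [] = [] := rfl
lemma sw_cons (c : Ltr) (x : W) : sw (c::x) = swc c :: sw x := rfl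
lemma sw_append (x y : W) : sw (x ++ y) = sw x ++ sw y := List.map_append

lemma sw_sw (x : W) : sw (sw x) = x := by
  induction x with
  | nil => rfl
  | cons c t ih =>
    have : swc (swc c) = c := by fin_cases c <;> rfl
    simp [sw_cons, this, ih]

lemma rel_sw {x y : W} (h : Rel x y) : Rel (sw y) (sw x) := by
  obtain ⟨l, r, hx, hy⟩ := h
  refine ⟨sw l, sw r, ?_, ?_⟩
  · rw [hy, sw_append, sw_append]; rfl
  · rw [hx, sw_append, sw_append]; rfl

lemma step_sw {x y : W} (h : Step x y) : Step (sw x) (sw y) :=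
  h.elim (fun h' => Or.inr (rel_sw h')) (fun h' => Or.inl (rel_sw h'))

lemma beq_sw {x y : W} (h : x ≋ y) : sw x ≋ sw y := by
  obtain ⟨n, h⟩ := h
  refine ⟨n, ?_⟩
  induction h with
  | refl => exact .refl _
  | cons s _ ih => exact .cons (step_sw s) ih

lemma rel_length3 {x y : W} (h : Rel x y) : 3 ≤ x.length := by
  obtain ⟨l, r, hx, _⟩ := h; simp [hx]; omega

lemma step_length3 {x y : W} (h : Step x y) : 3 ≤ x.length := by
  rcases h with h | h
  · exact rel_length3 h
  · have := rel_length3 h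
    have e := rel_length h
    omega

lemma short_rigid {n : ℕ} {x y : W} (hl : x.length < 3) (h : Ch n x y) : x = y := by
  induction h with
  | refl => rfl
  | cons s _ ih => exact absurd (step_length3 s) (by omega)


lemma step_cons_cases {c : Ltr} {u y : W} (h : Step (c::u) y) :
    (∃ u', y = c::u' ∧ Step u u') ∨
    (∃ r, c::u = 0::1::0::r ∧ y = 1::0::1::r) ∨
    (∃ r, c::u = 1::0::1::r ∧ y = 0::1::0::r) := by
  rcases h with ⟨l, r, hx, hy⟩ | ⟨l, r, hy, hx⟩
  · cases l with
    | nil =>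
      simp only [List.nil_append] at hx hy
      exact Or.inr (Or.inl ⟨r, by simpa using hx, by simpa using hy⟩)
    | cons d l' =>
      simp only [List.cons_append] at hx hy
      have h1 : c = d := (List.cons.inj hx).1
      have h2 : u = l' ++ [0,1,0] ++ r := by
        have := (List.cons.inj hx).2; simpa using this
      subst h1
      refine Or.inl ⟨l' ++ [1,0,1] ++ r, by simp [hy], Or.inl ⟨l', r, h2, by simp⟩⟩
  · cases l with
    | nil =>
      simp only [List.nil_append] at hx hy
      exact Or.inr (Or.inr ⟨r, by simpa using hx, by simpa using hy⟩)
    | cons d l' =>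
      simp only [List.cons_append] at hx hy
      have h1 : c = d := (List.cons.inj hx).1
      have h2 : u = l' ++ [1,0,1] ++ r := by
        have := (List.cons.inj hx).2; simpa using this
      subst h1
      refine Or.inl ⟨l' ++ [0,1,0] ++ r, by simp [hy], Or.inr ⟨l', r, by simp, h2⟩⟩

lemma fin2_01 : (0 : Ltr) ≠ 1 := by decide
lemma fin2_10 : (1 : Ltr) ≠ 0 := by decide

lemma aux_flip : ∀ n : ℕ, ∀ x v : W, Ch n (1::x) (0::v) →
    ∃ ρ m, (x ≋ 0::1::ρ) ∧ m < n ∧ Ch m (0::1::0::ρ) (0::v) := by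
  intro n
  induction n using Nat.strong_induction_on with
  | _ n ihn =>
    intro x v h
    cases h with
    | @cons n₀ _ y _ s h' =>
      rcases step_cons_cases s with ⟨u', rfl, s'⟩ | ⟨r, h1, h2⟩ | ⟨r, h1, h2⟩
      · obtain ⟨ρ, m, hx, hm, hc⟩ := ihn n₀ (by omega) u' v h'
        exact ⟨ρ, m, beq_trans (beq_of_step s') hx, by omega, hc⟩
      · exact absurd (List.cons.inj h1).1 fin2_10
      · have hx : x = 0::1::r := (List.cons.inj h1).2
        subst h2
        exact ⟨r, n₀, hx ▸ beq_refl _, by omega, h'⟩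

lemma sw1 : swc 1 = 0 := rfl
lemma sw0 : swc 0 = 1 := rfl

lemma lca : ∀ N : ℕ, ∀ u v : W, ∀ n : ℕ, u.length ≤ N → Ch n (0::u) (0::v) → u ≋ v := by
  intro N
  induction N with
  | zero =>
    intro u v n hl hch
    have hu : u = [] := List.length_eq_zero_iff.mp (by omega)
    subst hu
    have := short_rigid (x := [0]) (by simp) hch
    have : v = [] := by simpa using this.symm
    subst this; exact beq_refl _
  | succ N ihN =>
    have H : ∀ n : ℕ, ∀ u v : W, u.length ≤ N + 1 → Ch n (0::u) (0::v) → u ≋ v := by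
      intro n
      induction n using Nat.strong_induction_on with
      | _ n ihn =>
        intro u v hl hch
        cases hch with
        | refl => exact beq_refl _
        | @cons n₀ _ y _ s h' =>
          rcases step_cons_cases s with ⟨u₁, rfl, s'⟩ | ⟨r, h1, h2⟩ | ⟨r, h1, h2⟩
          · have hl1 : u₁.length ≤ N + 1 := by rw [← step_length s']; exact hl
            exact beq_trans (beq_of_step s') (ihn n₀ (by omega) u₁ v hl1 h')
          · -- 0::u = 0::1::0::r, y = 1::0::1::r
            have hu : u = 1::0::r := (List.cons.inj h1).2
            subst h2
            obtain ⟨ρ, m, hρ, hm, hc⟩ := aux_flip n₀ (0::1::r) v h'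
            -- cancel twice in hρ : 0::1::r ≋ 0::1::ρ
            have hlr : u.length = r.length + 2 := by rw [hu]; simp
            obtain ⟨n₁, hch₁⟩ := hρ
            have h1r : (1::r : W) ≋ 1::ρ := ihN (1::r) (1::ρ) n₁ (by simp; omega) hch₁
            have hsw : (0::sw r : W) ≋ 0::sw ρ := by
              have := beq_sw h1r
              simpa [sw_cons, sw1] using this
            obtain ⟨n₂, hch₂⟩ := hsw
            have hrρ' : sw r ≋ sw ρ := ihN (sw r) (sw ρ) n₂ (by simp [sw]; omega) hch₂
            have hrρ : r ≋ ρ := by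
              have := beq_sw hrρ'
              rwa [sw_sw, sw_sw] at this
            have hlρ : (1::0::ρ : W).length ≤ N + 1 := by
              have := beq_length hrρ; simp; omega
            have hfin : (1::0::ρ : W) ≋ v := ihn m (by omega) (1::0::ρ) v hlρ hc
            exact beq_trans (hu ▸ beq_cons 1 (beq_cons 0 hrρ)) hfin
          · exact absurd (List.cons.inj h1).1 fin2_01
    exact fun u v n hl hch => H n u v hl hch

lemma lc0 {u v : W} (h : (0::u : W) ≋ (0::v)) : u ≋ v := by
  obtain ⟨n, hch⟩ := h
  exact lca u.length u v n le_rfl hch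

lemma lc1 {u v : W} (h : (1::u : W) ≋ (1::v)) : u ≋ v := by
  have := beq_sw h
  simp only [sw_cons, sw1] at this
  have := beq_sw (lc0 this)
  rwa [sw_sw, sw_sw] at this

lemma lc (c : Ltr) {u v : W} (h : (c::u : W) ≋ (c::v)) : u ≋ v := by
  fin_cases c
  · exact lc0 h
  · exact lc1 h

lemma lcW (s : W) {u v : W} (h : (s ++ u) ≋ (s ++ v)) : u ≋ v := by
  induction s with
  | nil => simpa using h
  | cons c t ih => exact ih (lc c (by simpa using h))

lemma rcW (s : W) {u v : W} (h : (u ++ s) ≋ (v ++ s)) : u ≋ v := by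
  have := beq_reverse h
  simp only [List.reverse_append] at this
  have := lcW s.reverse this
  have := beq_reverse this
  simpa using this

lemma lemmaL' : ∀ n : ℕ, ∀ u v : W, Ch n (0::u) (1::v) →
    ∃ z, u ≋ 1::0::z ∧ v ≋ 0::1::z := by
  intro n
  induction n using Nat.strong_induction_on with
  | _ n ihn =>
    intro u v hch
    cases hch with
    | @cons n₀ _ y _ s h' =>
      rcases step_cons_cases s with ⟨u₁, rfl, s'⟩ | ⟨r, h1, h2⟩ | ⟨r, h1, h2⟩
      · obtain ⟨z, hz1, hz2⟩ := ihn n₀ (by omega) u₁ v h'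
        exact ⟨z, beq_trans (beq_of_step s') hz1, hz2⟩
      · have hu : u = 1::0::r := (List.cons.inj h1).2
        subst h2
        have : (0::1::r : W) ≋ v := lc1 ⟨n₀, h'⟩
        exact ⟨r, hu ▸ beq_refl _, beq_symm this⟩
      · exact absurd (List.cons.inj h1).1 fin2_01

lemma lemmaL {u v : W} (h : (0::u : W) ≋ (1::v)) :
    ∃ z, u ≋ 1::0::z ∧ v ≋ 0::1::z := by
  obtain ⟨n, hch⟩ := h
  exact lemmaL' n u v hch

lemma rigid_of {x : W} (hx : ∀ y, ¬ Step x y) : ∀ n : ℕ, ∀ u : W, Ch n u x → u = x := by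
  intro n u h
  induction h with
  | refl => rfl
  | cons s _ ih =>
    have h2 := ih hx
    subst h2
    exact absurd s.symm' (hx _)

lemma rigid_of' {x u : W} (hx : ∀ y, ¬ Step x y) (h : u ≋ x) : u = x := by
  obtain ⟨n, hch⟩ := h; exact rigid_of hx n u hch

lemma zero_mem_rel_left {x y : W} (h : Rel x y) : (0:Ltr) ∈ x := by
  obtain ⟨l, r, rfl, -⟩ := h; simp

lemma zero_mem_rel_right {x y : W} (h : Rel x y) : (0:Ltr) ∈ y := by
  obtain ⟨l, r, -, rfl⟩ := h; simp

lemma zero_mem_step {x y : W} (h : Step x y) : (0:Ltr) ∈ x :=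
  h.elim zero_mem_rel_left zero_mem_rel_right

/-- `b^k` is rigid. -/
lemma nostep_rep1 (k : ℕ) (y : W) : ¬ Step (List.replicate k 1) y := by
  intro h
  exact fin2_01 (List.eq_of_mem_replicate (zero_mem_step h))

lemma rigid_rep1 {k : ℕ} {u : W} (h : u ≋ List.replicate k 1) : u = List.replicate k 1 :=
  rigid_of' (nostep_rep1 k) h

/-- `a b^k` is rigid. -/
lemma nostep_01k (k : ℕ) (y : W) : ¬ Step (0 :: List.replicate k 1) y := by
  intro h
  rcases h with ⟨l, r, hx, -⟩ | ⟨l, r, -, hx⟩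
  · cases l with
    | nil =>
      simp only [List.nil_append] at hx
      have h2 : List.replicate k 1 = (1:Ltr)::0::r := (List.cons.inj hx).2
      cases k with
      | zero => simp at h2
      | succ k' =>
        rw [List.replicate_succ] at h2
        have : List.replicate k' (1:Ltr) = 0::r := (List.cons.inj h2).2
        have : (0:Ltr) ∈ List.replicate k' (1:Ltr) := by rw [this]; simp
        exact fin2_01 (List.eq_of_mem_replicate this)
    | cons d l' =>
      simp only [List.cons_append] at hx
      have h2 : List.replicate k (1:Ltr) = l' ++ [0,1,0] ++ r := (List.cons.inj hx).2
      have : (0:Ltr) ∈ List.replicate k (1:Ltr) := by rw [h2]; simp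
      exact fin2_01 (List.eq_of_mem_replicate this)
  · cases l with
    | nil =>
      simp only [List.nil_append] at hx
      exact fin2_01 (List.cons.inj hx).1
    | cons d l' =>
      simp only [List.cons_append] at hx
      have h2 : List.replicate k (1:Ltr) = l' ++ [1,0,1] ++ r := (List.cons.inj hx).2
      have : (0:Ltr) ∈ List.replicate k (1:Ltr) := by rw [h2]; simp
      exact fin2_01 (List.eq_of_mem_replicate this)

lemma rigid_01k {k : ℕ} {u : W} (h : u ≋ 0 :: List.replicate k 1) :
    u = 0 :: List.replicate k 1 := rigid_of' (nostep_01k k) h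

/-- no adjacent (1,0) inside 0^m 1^l -/
lemma no_10_in : ∀ (s : W) (m l : ℕ) (t : W),
    List.replicate m (0:Ltr) ++ List.replicate l 1 = s ++ 1 :: 0 :: t → False := by
  intro s
  induction s with
  | nil =>
    intro m l t h
    simp only [List.nil_append] at h
    cases m with
    | succ m' =>
      rw [List.replicate_succ] at h
      exact fin2_01 (List.cons.inj h).1
    | zero =>
      simp only [List.replicate, List.nil_append] at h
      cases l with
      | zero => simp at h
      | succ l' =>
        rw [List.replicate_succ] at h
        have h2 : List.replicate l' (1:Ltr) = 0::t := (List.cons.inj h).2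
        have : (0:Ltr) ∈ List.replicate l' (1:Ltr) := by rw [h2]; simp
        exact fin2_01 (List.eq_of_mem_replicate this)
  | cons c s' ih =>
    intro m l t h
    cases m with
    | succ m' =>
      rw [List.replicate_succ] at h
      simp only [List.cons_append] at h
      exact ih m' l t (List.cons.inj h).2
    | zero =>
      simp only [List.replicate, List.nil_append] at h
      cases l with
      | zero => simp at h
      | succ l' =>
        rw [List.replicate_succ] at h
        simp only [List.cons_append] at h
        have := (List.cons.inj h).2
        exact ih 0 l' t (by simpa using this)

/-- `b a^m b^l` is rigid for `m ≥ 2`. -/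
lemma nostep_1m0 (m l : ℕ) (hm : 2 ≤ m) (y : W) :
    ¬ Step (1 :: (List.replicate m 0 ++ List.replicate l 1)) y := by
  intro h
  rcases h with ⟨s, r, hx, -⟩ | ⟨s, r, -, hx⟩
  · cases s with
    | nil =>
      simp only [List.nil_append] at hx
      exact fin2_10 (List.cons.inj hx).1
    | cons d s' =>
      simp only [List.cons_append] at hx
      have h2 : List.replicate m (0:Ltr) ++ List.replicate l 1 = s' ++ [0,1,0] ++ r :=
        (List.cons.inj hx).2
      have h3 : List.replicate m (0:Ltr) ++ List.replicate l 1 = (s' ++ [0]) ++ 1 :: 0 :: r := by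
        rw [h2]; simp
      exact no_10_in _ m l r h3
  · cases s with
    | nil =>
      simp only [List.nil_append] at hx
      have h2 : List.replicate m (0:Ltr) ++ List.replicate l 1 = 0::1::r := (List.cons.inj hx).2
      obtain ⟨m', rfl⟩ : ∃ m', m = m' + 2 := ⟨m - 2, by omega⟩
      rw [List.replicate_succ, List.replicate_succ] at h2
      simp only [List.cons_append] at h2
      exact fin2_01 (List.cons.inj (List.cons.inj h2).2).1
    | cons d s' =>
      simp only [List.cons_append] at hx
      have h2 : List.replicate m (0:Ltr) ++ List.replicate l 1 = s' ++ [1,0,1] ++ r :=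
        (List.cons.inj hx).2
      have h3 : List.replicate m (0:Ltr) ++ List.replicate l 1 = s' ++ 1 :: 0 :: ([1] ++ r) := by
        rw [h2]; simp
      exact no_10_in _ m l _ h3

lemma rigid_1m0 {m l : ℕ} (hm : 2 ≤ m) {u : W}
    (h : u ≋ 1 :: (List.replicate m 0 ++ List.replicate l 1)) :
    u = 1 :: (List.replicate m 0 ++ List.replicate l 1) :=
  rigid_of' (nostep_1m0 m l hm) h

lemma rigid_short {x u : W} (hx : x.length < 3) (h : u ≋ x) : u = x := by
  obtain ⟨n, hch⟩ := h
  exact short_rigid (by rw [beq_length ⟨n, hch⟩]; exact hx) hch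

def Conc (i k : ℕ) (w : W) : Prop :=
  (∃ i' ≤ i, w = List.replicate i' 1 ++ [0, 1] ++ List.replicate (i - i') 0 ++
      List.replicate (k - 1) 1) ∨
  (∃ k' ≤ k, w = List.replicate (i - 1) 1 ++ List.replicate (k - k') 0 ++ [1, 0] ++
      List.replicate k' 1)

lemma INC1 {i₀ k : ℕ} {w₁ : W} (hi₀ : 1 ≤ i₀) (h : Conc i₀ k w₁) :
    Conc (i₀+1) k (1::w₁) := by
  rcases h with ⟨i', hle, rfl⟩ | ⟨k', hle, rfl⟩
  · refine Or.inl ⟨i'+1, by omega, ?_⟩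
    rw [show i₀+1-(i'+1) = i₀ - i' from by omega]
    simp [List.replicate_succ]
  · refine Or.inr ⟨k', hle, ?_⟩
    rw [show i₀+1-1 = (i₀-1)+1 from by omega]
    simp [List.replicate_succ]

lemma INC2 {k₀ : ℕ} {w₁ : W} (hk₀ : 1 ≤ k₀) (h : Conc 1 k₀ w₁) :
    Conc 1 (k₀+1) (0::w₁) := by
  rcases h with ⟨i', hle, rfl⟩ | ⟨k', hle, rfl⟩
  · interval_cases i'
    · refine Or.inr ⟨k₀-1, by omega, ?_⟩
      rw [show (k₀+1)-(k₀-1) = 2 from by omega]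
      simp [List.replicate_succ]
    · refine Or.inr ⟨k₀, by omega, ?_⟩
      rw [show (k₀+1)-k₀ = 1 from by omega,
        show k₀ = (k₀ - 1) + 1 from by omega]
      simp [List.replicate_succ]
  · refine Or.inr ⟨k', by omega, ?_⟩
    rw [show (k₀+1)-k' = (k₀-k')+1 from by omega]
    simp [List.replicate_succ]

lemma EXT {i₀ k : ℕ} {z : W} (hi₀ : 1 ≤ i₀) (hk : 1 ≤ k) (h : Conc i₀ k (0::1::z)) :
    z = List.replicate i₀ 0 ++ List.replicate (k-1) 1 := by
  rcases h with ⟨i', hle, heq⟩ | ⟨k', hle, heq⟩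
  · rcases Nat.eq_zero_or_pos i' with rfl | hi'
    · simp at heq
      exact heq
    · obtain ⟨i'', rfl⟩ : ∃ t, i' = t + 1 := ⟨i'-1, by omega⟩
      rw [List.replicate_succ] at heq
      simp only [List.cons_append, List.append_assoc] at heq
      exact absurd (List.cons.inj heq).1 fin2_01
  · rcases Nat.lt_or_ge i₀ 2 with h2 | h2
    · have : i₀ = 1 := by omega
      subst this
      rw [show (1:ℕ) - 1 = 0 from by omega] at heq
      simp only [List.replicate_zero, List.nil_append] at heq
      rcases Nat.lt_or_ge (k - k') 1 with h3 | h3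
      · rw [show k - k' = 0 from by omega] at heq
        simp only [List.replicate_zero, List.nil_append] at heq
        exact absurd (List.cons.inj heq).1.symm fin2_10
      · rcases Nat.lt_or_ge (k - k') 2 with h4 | h4
        · rw [show k - k' = 1 from by omega] at heq
          simp only [List.replicate_succ, List.replicate_zero] at heq
          simp only [List.cons_append, List.nil_append] at heq
          have hz : z = 0 :: List.replicate k' 1 := (List.cons.inj (List.cons.inj heq).2).2
          rw [hz, show k' = k - 1 from by omega]
          simp [List.replicate_succ]
        · obtain ⟨d, hd⟩ : ∃ d, k - k' = d + 2 := ⟨k - k' - 2, by omega⟩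
          rw [hd, List.replicate_succ, List.replicate_succ] at heq
          simp only [List.cons_append] at heq
          exact absurd (List.cons.inj (List.cons.inj heq).2).1 fin2_10
    · obtain ⟨d, hd⟩ : ∃ d, i₀ - 1 = d + 1 := ⟨i₀-2, by omega⟩
      rw [hd, List.replicate_succ] at heq
      simp only [List.cons_append] at heq
      exact absurd (List.cons.inj heq).1 fin2_01

theorem main : ∀ M i k w, i + k ≤ M → 1 ≤ i → 1 ≤ k →
    (w ≋ (List.replicate i 1 ++ 0 :: List.replicate k 1)) → Conc i k w := by
  intro M
  induction M with
  | zero => intro i k w hM hi hk _; omega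
  | succ M ihM =>
    intro i k w hM hi hk hw
    obtain ⟨i₀, rfl⟩ : ∃ i₀, i = i₀ + 1 := ⟨i-1, by omega⟩
    rw [show List.replicate (i₀+1) (1:Ltr) ++ 0 :: List.replicate k 1
        = 1 :: (List.replicate i₀ 1 ++ 0 :: List.replicate k 1) from by
      simp [List.replicate_succ]] at hw
    rcases w with _ | ⟨c, w₁⟩
    · have := beq_length hw
      simp at this
    · fin_cases c
      · -- w = 0 :: w₁
        obtain ⟨z, hz1, hz2⟩ := lemmaL hw
        rcases Nat.eq_zero_or_pos i₀ with rfl | hi₀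
        · -- i = 1
          have h2 : (0::1::z : W) = 0 :: List.replicate k 1 :=
            rigid_01k (beq_symm (by simpa using hz2))
          obtain ⟨k₀, rfl⟩ : ∃ k₀, k = k₀ + 1 := ⟨k-1, by omega⟩
          rw [List.replicate_succ] at h2
          have hz : z = List.replicate k₀ 1 := (List.cons.inj (List.cons.inj h2).2).2
          subst hz
          rcases Nat.eq_zero_or_pos k₀ with rfl | hk₀
          · have hw₁ : w₁ = [1,0] := rigid_short (by simp) (by simpa using hz1)
            subst hw₁
            refine Or.inr ⟨0, by omega, ?_⟩
            simp [List.replicate_succ]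
          · have hw₁ : w₁ ≋ List.replicate 1 1 ++ 0 :: List.replicate k₀ 1 := by
              simpa using hz1
            exact INC2 hk₀ (ihM 1 k₀ w₁ (by omega) le_rfl hk₀ hw₁)
        · -- i₀ ≥ 1
          have hc : Conc i₀ k (0::1::z) := ihM i₀ k _ (by omega) hi₀ hk (beq_symm hz2)
          have hz : z = List.replicate i₀ 0 ++ List.replicate (k-1) 1 := EXT hi₀ hk hc
          subst hz
          have hw₁ : w₁ = 1 :: (List.replicate (i₀+1) 0 ++ List.replicate (k-1) 1) := by
            apply rigid_1m0 (by omega)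
            simpa [List.replicate_succ] using hz1
          subst hw₁
          refine Or.inl ⟨0, by omega, ?_⟩
          simp
      · -- w = 1 :: w₁
        have hw₁ : w₁ ≋ List.replicate i₀ 1 ++ 0 :: List.replicate k 1 := lc1 hw
        rcases Nat.eq_zero_or_pos i₀ with rfl | hi₀
        · have hw₁' : w₁ = 0 :: List.replicate k 1 := rigid_01k (by simpa using hw₁)
          subst hw₁'
          refine Or.inl ⟨1, by omega, ?_⟩
          rw [show k = (k-1)+1 from by omega, List.replicate_succ]
          simp [List.replicate_succ]
        · exact INC1 hi₀ (ihM i₀ k w₁ (by omega) hi₀ hk hw₁)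

/-! ### The Garside element and powers -/

def Dl : W := [0,1,0,1,0,1]

def Dp : ℕ → W
  | 0 => []
  | n+1 => Dl ++ Dp n

lemma Dp_add (m n : ℕ) : Dp (m + n) = Dp m ++ Dp n := by
  induction m with
  | zero => simp [Dp, Nat.zero_add]
  | succ m ih =>
    rw [show m + 1 + n = (m + n) + 1 from by omega]
    simp [Dp, ih]

instance : Trans Beq Beq Beq := ⟨beq_trans⟩
instance : Trans Beq (Eq (α := W)) Beq := ⟨fun h e => e ▸ h⟩
instance : Trans (Eq (α := W)) Beq Beq := ⟨fun e h => e ▸ h⟩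

lemma delta_c (c : Ltr) : (c :: [0,1,0] : W) ≋ ([0,1,0] ++ [swc c]) := by
  fin_cases c
  · exact beq_of_step (Or.inl ⟨[0], [], rfl, rfl⟩)
  · exact beq_of_step (Or.inr ⟨[], [0], rfl, rfl⟩)

lemma w_delta : ∀ w : W, (w ++ [0,1,0] : W) ≋ ([0,1,0] ++ sw w) := by
  intro w
  induction w with
  | nil => simpa [sw_nil] using beq_refl ([0,1,0] : W)
  | cons c t ih =>
    calc (c :: t) ++ [0,1,0] = c :: (t ++ [0,1,0]) := by simp
    _ ≋ c :: ([0,1,0] ++ sw t) := beq_cons c ih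
    _ = (c :: [0,1,0]) ++ sw t := by simp
    _ ≋ ([0,1,0] ++ [swc c]) ++ sw t := beq_append_right _ (delta_c c)
    _ = [0,1,0] ++ sw (c :: t) := by simp [sw_cons]

lemma bab_aba : ([1,0,1] : W) ≋ [0,1,0] := beq_of_step (Or.inr ⟨[], [], rfl, rfl⟩)

lemma w_D (w : W) : (w ++ Dl : W) ≋ (Dl ++ w) := by
  calc (w ++ Dl : W) = w ++ ([0,1,0] ++ [1,0,1]) := by simp [Dl]
  _ ≋ w ++ ([0,1,0] ++ [0,1,0]) := beq_append_left _ (beq_append_left _ bab_aba)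
  _ = (w ++ [0,1,0]) ++ [0,1,0] := by simp
  _ ≋ ([0,1,0] ++ sw w) ++ [0,1,0] := beq_append_right _ (w_delta w)
  _ = [0,1,0] ++ (sw w ++ [0,1,0]) := by simp
  _ ≋ [0,1,0] ++ ([0,1,0] ++ sw (sw w)) := beq_append_left _ (w_delta (sw w))
  _ = ([0,1,0] ++ [0,1,0]) ++ w := by simp [sw_sw]
  _ ≋ ([0,1,0] ++ [1,0,1]) ++ w := beq_append_right _ (beq_append_left _ (beq_symm bab_aba))
  _ = Dl ++ w := by simp [Dl]

lemma w_Dp (j : ℕ) (w : W) : (w ++ Dp j : W) ≋ (Dp j ++ w) := by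
  induction j with
  | zero => simp [Dp]; exact beq_refl _
  | succ j ih =>
    calc (w ++ Dp (j+1) : W) = (w ++ Dl) ++ Dp j := by simp [Dp]
    _ ≋ (Dl ++ w) ++ Dp j := beq_append_right _ (w_D w)
    _ = Dl ++ (w ++ Dp j) := by simp
    _ ≋ Dl ++ (Dp j ++ w) := beq_append_left _ ih
    _ = Dp (j+1) ++ w := by simp [Dp]

def ec : Ltr → W := fun c => if c = 0 then [1,0,1,0,1] else [0,1,0,1,0]

lemma ce (c : Ltr) : ([c] ++ ec c : W) ≋ Dl := by
  fin_cases c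
  · exact beq_refl _
  · refine ⟨2, .cons (Or.inr ⟨[], [0,1,0], rfl, rfl⟩) (.cons (Or.inl ⟨[0,1,0], [], rfl, rfl⟩) (.refl _))⟩

lemma rev_Dl : (Dl.reverse : W) ≋ Dl := by
  have h := ce 1
  simpa [ec, Dl] using h

lemma rev_Dp (j : ℕ) : ((Dp j).reverse : W) ≋ Dp j := by
  induction j with
  | zero => exact beq_refl _
  | succ j ih =>
    calc ((Dp (j+1)).reverse : W) = (Dp j).reverse ++ Dl.reverse := by simp [Dp]
    _ ≋ Dp j ++ Dl := beq_append ih rev_Dl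
    _ = Dp j ++ Dp 1 := by simp [Dp]
    _ = Dp (j+1) := (Dp_add _ _).symm

lemma compl : ∀ w : W, ∃ u : W, (w ++ u : W) ≋ Dp w.length := by
  intro w
  induction w with
  | nil => exact ⟨[], by simpa [Dp] using beq_refl ([] : W)⟩
  | cons c t ih =>
    obtain ⟨u, hu⟩ := ih
    refine ⟨u ++ ec c, ?_⟩
    calc ((c::t) ++ (u ++ ec c) : W) = ([c] ++ (t ++ u)) ++ ec c := by simp
    _ ≋ ([c] ++ Dp t.length) ++ ec c := beq_append_right _ (beq_append_left [c] hu)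
    _ ≋ (Dp t.length ++ [c]) ++ ec c := beq_append_right _ (w_Dp _ [c])
    _ = Dp t.length ++ ([c] ++ ec c) := by simp
    _ ≋ Dp t.length ++ Dl := beq_append_left _ (ce c)
    _ = Dp t.length ++ Dp 1 := by simp [Dp]
    _ = Dp (t.length + 1) := (Dp_add _ _).symm
    _ = Dp ((c::t).length) := by simp

lemma compl_left : ∀ w : W, ∃ v : W, (v ++ w : W) ≋ Dp w.length := by
  intro w
  obtain ⟨c, hc⟩ := compl w.reverse
  refine ⟨c.reverse, ?_⟩
  have h := beq_reverse hc
  simp only [List.reverse_append, List.reverse_reverse] at h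
  calc (c.reverse ++ w : W) ≋ (Dp w.reverse.length).reverse := h
  _ ≋ Dp w.reverse.length := rev_Dp _
  _ = Dp w.length := by simp

/-! ### fraction group -/

def frRel (p q : ℕ × W) : Prop := (p.2 ++ Dp q.1 : W) ≋ q.2 ++ Dp p.1

lemma Dp_comm (m n : ℕ) : (Dp m ++ Dp n : W) = Dp n ++ Dp m := by
  rw [← Dp_add, ← Dp_add, Nat.add_comm]

lemma key_split (u v : W) (m n : ℕ) :
    ((u ++ v) ++ Dp (m + n) : W) ≋ (u ++ Dp m) ++ (v ++ Dp n) := by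
  calc ((u ++ v) ++ Dp (m + n) : W) = u ++ ((v ++ Dp n) ++ Dp m) := by
        rw [show m + n = n + m from Nat.add_comm m n, Dp_add]; simp
  _ ≋ u ++ (Dp m ++ (v ++ Dp n)) := beq_append_left _ (w_Dp m (v ++ Dp n))
  _ = (u ++ Dp m) ++ (v ++ Dp n) := by simp

lemma frRel_refl (p : ℕ × W) : frRel p p := beq_refl _

lemma frRel_symm {p q : ℕ × W} (h : frRel p q) : frRel q p := beq_symm h

lemma frRel_trans {p q r : ℕ × W} (h1 : frRel p q) (h2 : frRel q r) : frRel p r := by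
  unfold frRel at *
  apply rcW (Dp q.1)
  calc (p.2 ++ Dp r.1) ++ Dp q.1 = (p.2 ++ Dp q.1) ++ Dp r.1 := by
        simp only [List.append_assoc]; rw [Dp_comm]
  _ ≋ (q.2 ++ Dp p.1) ++ Dp r.1 := beq_append_right _ h1
  _ = (q.2 ++ Dp r.1) ++ Dp p.1 := by
        simp only [List.append_assoc]; rw [Dp_comm]
  _ ≋ (r.2 ++ Dp q.1) ++ Dp p.1 := beq_append_right _ h2
  _ = (r.2 ++ Dp p.1) ++ Dp q.1 := by
        simp only [List.append_assoc]; rw [Dp_comm]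

instance frSetoid : Setoid (ℕ × W) :=
  ⟨frRel, ⟨frRel_refl, frRel_symm, frRel_trans⟩⟩

abbrev FracB := Quotient frSetoid

instance : One FracB := ⟨Quotient.mk frSetoid (0, [])⟩

lemma mul_welldef : ∀ p p' : ℕ × W, p ≈ p' → ∀ q q' : ℕ × W, q ≈ q' →
    frRel (p.1 + q.1, p.2 ++ q.2) (p'.1 + q'.1, p'.2 ++ q'.2) := by
  intro p p' hp q q' hq
  unfold frRel
  calc ((p.2 ++ q.2) ++ Dp (p'.1 + q'.1) : W)
      ≋ (p.2 ++ Dp p'.1) ++ (q.2 ++ Dp q'.1) := key_split _ _ _ _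
  _ ≋ (p'.2 ++ Dp p.1) ++ (q'.2 ++ Dp q.1) := beq_append hp hq
  _ ≋ (p'.2 ++ q'.2) ++ Dp (p.1 + q.1) := beq_symm (key_split _ _ _ _)

instance : Mul FracB :=
  ⟨Quotient.map₂ (fun p q => (p.1 + q.1, p.2 ++ q.2))
    (fun p p' hp q q' hq => mul_welldef p p' hp q q' hq)⟩

lemma mk_mul (p q : ℕ × W) :
    (Quotient.mk frSetoid p * Quotient.mk frSetoid q : FracB)
      = Quotient.mk frSetoid (p.1 + q.1, p.2 ++ q.2) := rfl

lemma exists_left_inv (x : FracB) : ∃ y : FracB, y * x = 1 := by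
  induction x using Quotient.inductionOn with
  | _ p =>
    obtain ⟨n, u⟩ := p
    obtain ⟨v, hv⟩ := compl_left u
    refine ⟨Quotient.mk frSetoid (u.length, v ++ Dp n), ?_⟩
    rw [mk_mul]
    apply Quotient.sound
    show frRel _ _
    unfold frRel
    simp only [Dp]
    calc (((v ++ Dp n) ++ u) ++ [] : W) = v ++ (Dp n ++ u) := by simp
    _ ≋ v ++ (u ++ Dp n) := beq_append_left _ (beq_symm (w_Dp n u))
    _ = (v ++ u) ++ Dp n := by simp
    _ ≋ Dp u.length ++ Dp n := beq_append_right _ hv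
    _ = [] ++ Dp (u.length + n) := by rw [← Dp_add]; simp

noncomputable instance : Inv FracB := ⟨fun x => Classical.choose (exists_left_inv x)⟩

noncomputable instance : Group FracB := by
  apply Group.ofLeftAxioms
  · intro x y z
    induction x using Quotient.inductionOn with | _ p =>
    induction y using Quotient.inductionOn with | _ q =>
    induction z using Quotient.inductionOn with | _ r =>
    rw [mk_mul, mk_mul, mk_mul, mk_mul]
    rw [Nat.add_assoc, List.append_assoc]
  · intro x
    induction x using Quotient.inductionOn with | _ p =>
    show (Quotient.mk frSetoid (0, []) * Quotient.mk frSetoid p : FracB) = _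
    rw [mk_mul]
    simp
  · intro x
    exact Classical.choose_spec (exists_left_inv x)


/-! ### the homomorphism from the braid group -/

lemma relhom : ∀ r ∈ braidRels,
    FreeGroup.lift (fun c : Fin 2 => (Quotient.mk frSetoid (0, ([c] : W)) : FracB)) r = 1 := by
  intro r hr
  rw [braidRels, Set.mem_singleton_iff] at hr
  subst hr
  simp only [map_mul, map_inv, FreeGroup.lift_apply_of]
  rw [mul_inv_eq_one]
  rw [mk_mul, mk_mul, mk_mul, mk_mul]
  apply Quotient.sound
  show frRel _ _
  unfold frRel
  simp only [Dp, List.append_nil]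
  exact beq_of_step (Or.inl ⟨[], [], rfl, rfl⟩)

noncomputable def theta : BraidGroup →* FracB := PresentedGroup.toGroup relhom

lemma theta_word : ∀ w : W, theta (wordProd w) = Quotient.mk frSetoid (0, w) := by
  intro w
  induction w with
  | nil =>
    show theta (wordProd []) = _
    have : wordProd [] = 1 := by simp [wordProd]
    rw [this, map_one]
    rfl
  | cons c t ih =>
    have h1 : wordProd (c::t) = PresentedGroup.of c * wordProd t := by
      simp [wordProd]
    rw [h1, map_mul, ih]
    have h2 : theta (PresentedGroup.of c) = Quotient.mk frSetoid (0, ([c] : W)) :=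
      PresentedGroup.toGroup.of relhom
    rw [h2, mk_mul]
    rfl

lemma wordProd_append (u v : W) : wordProd (u ++ v) = wordProd u * wordProd v := by
  simp [wordProd]

lemma wordProd_rep1 (n : ℕ) : wordProd (List.replicate n 1) = b ^ n := by
  simp [wordProd, List.map_replicate, List.prod_replicate, b]

lemma target_eq (i k : ℕ) :
    wordProd (List.replicate i 1 ++ 0 :: List.replicate k 1) = b ^ i * a * b ^ k := by
  rw [show (0 :: List.replicate k 1 : W) = [0] ++ List.replicate k 1 from rfl]
  rw [← List.append_assoc, wordProd_append, wordProd_append, wordProd_rep1, wordProd_rep1]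
  have : wordProd [0] = a := by simp [wordProd, a]
  rw [this]

end B11


/-- If a positive word `w` over {a, b} equals `b^i · a · b^k` in the braid group
(with i, k ≥ 1), then `w` is of the form `b^{i'}·a·b·a^{i−i'}·b^{k−1}` for some
`0 ≤ i' ≤ i`, or `b^{i−1}·a^{k−k'}·b·a·b^{k'}` for some `0 ≤ k' ≤ k`. -/
theorem stmt11 (w : List (Fin 2)) (i k : ℕ) (hi : 1 ≤ i) (hk : 1 ≤ k)
    (h : wordProd w = b ^ i * a * b ^ k) :
    (∃ i' ≤ i, w = List.replicate i' 1 ++ [0, 1] ++ List.replicate (i - i') 0 ++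
        List.replicate (k - 1) 1) ∨
    (∃ k' ≤ k, w = List.replicate (i - 1) 1 ++ List.replicate (k - k') 0 ++ [1, 0] ++
        List.replicate k' 1) := by
  have heq : wordProd w = wordProd (List.replicate i 1 ++ 0 :: List.replicate k 1) := by
    rw [h, B11.target_eq]
  have hth : B11.theta (wordProd w)
      = B11.theta (wordProd (List.replicate i 1 ++ 0 :: List.replicate k 1)) := by rw [heq]
  rw [B11.theta_word, B11.theta_word] at hth
  have hfr : B11.frRel (0, w) (0, List.replicate i 1 ++ 0 :: List.replicate k 1) :=
    Quotient.exact hth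
  unfold B11.frRel at hfr
  simp only [B11.Dp, List.append_nil] at hfr
  exact B11.main (i + k) i k w le_rfl hi hk hfr
end
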